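/- In a rooted tree, a non-root vertex x is an articulation point of the graph G if and only if some child c of x in the DFS tree has high-point dfn value ≥ dfn(x), where the high-point of c is the minimum dfn among dfn(c) and the dfn's of endpoints of back edges from the subtree of c. -/

import Mathlib

open Classical Finset

structure RTree (V : Type*) where
  parent : V → V
  root : V
  parent_root : parent root = root
  reaches : ∀ v : V, ∃ k : ℕ, parent^[k] v = root

namespace RTree

variable {V : Type*}

/-- `u` is an ancestor of `v` (or `u = v`) in the rooted tree `T`. -/
def IsAncestor (T : RTree V) (u v : V) : Prop :=
  ∃ k : ℕ, T.parent^[k] v = u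

/-- depth of a vertex: distance (number of edges) from the root. -/
noncomputable def depth (T : RTree V) (v : V) : ℕ :=
  Nat.find (T.reaches v)

/-- number of vertices in the subtree rooted at `v`. -/
noncomputable def subtreeSize [Fintype V] (T : RTree V) (v : V) : ℕ :=
  (Finset.univ.filter fun u => T.IsAncestor v u).card

end RTree

/-- A heavy-light decomposition of a rooted tree: `heavy c` means the edge
from `parent c` to `c` is marked heavy (solid). -/
structure HLDecomp {V : Type*} [Fintype V] (T : RTree V) where
  heavy : V → Prop
  heavy_ne_root : ∀ c, heavy c → c ≠ T.root
  heavy_max : ∀ c c', heavy c → T.parent c' = T.parent c → c' ≠ T.parent c' →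
      T.subtreeSize c' ≤ T.subtreeSize c
  heavy_exists : ∀ u : V, (∃ c, T.parent c = u ∧ c ≠ u) → ∃ c, T.parent c = u ∧ c ≠ u ∧ heavy c
  heavy_unique : ∀ c c', heavy c → heavy c' → T.parent c = T.parent c' → c = c'

/-- number of light (dashed) edges on the tree path from the root to `v`. -/
noncomputable def lightCount {V : Type*} [Fintype V] (T : RTree V) (H : HLDecomp T) (v : V) : ℕ :=
  (Finset.univ.filter fun u => T.IsAncestor u v ∧ u ≠ T.root ∧ ¬ H.heavy u).card

/-- The high-point of a vertex `c`: the minimum dfn among `dfn c` and the dfn's of proper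
ancestors reached by back edges (non-tree edges of `G`) from vertices in the subtree of
`c`. -/
noncomputable def highPoint {n : ℕ} (G : SimpleGraph (Fin n)) (T : RTree (Fin n))
    (ord : Fin n ≃ Fin n) (c : Fin n) : WithTop ℕ :=
  ((Finset.univ.filter fun w => w = c ∨
      ∃ u : Fin n, T.IsAncestor c u ∧ G.Adj u w ∧ T.IsAncestor w u ∧ w ≠ u ∧
        T.parent u ≠ w).image fun w => (ord w : ℕ)).min

/-!
Edges of `G` only join ancestor–descendant pairs, so an edge leaving the subtree of a child `c`
of `x` either is the tree edge to `x` or is a back edge to a proper ancestor of `x`, i.e. to a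
vertex of dfn smaller than `dfn x`. If `dfn x ≤ highPoint c` there is no such back edge, and the
subtree of `c` is cut off from the root in `G - x`. Otherwise every vertex below `x` climbs the
tree to its child of `x` and jumps over `x` along a back edge, while every other vertex climbs
to the root directly.
-/

open SimpleGraph

theorem SimpleGraph.Reachable.mem_of_adj_closed {W : Type*} {H : SimpleGraph W} {S : Set W}
    (hS : ∀ a b, H.Adj a b → a ∈ S → b ∈ S) {a b : W} (h : H.Reachable a b) (ha : a ∈ S) :
    b ∈ S := by
  obtain ⟨p⟩ := h
  induction p with
  | nil => exact ha
  | cons hab _ ih => exact ih (hS _ _ hab ha)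

namespace RTree

variable {V : Type*} {T : RTree V} {u v w : V}

variable (T) in
theorem isAncestor_refl (v : V) : T.IsAncestor v v := ⟨0, rfl⟩

variable (T) in
theorem isAncestor_parent (v : V) : T.IsAncestor (T.parent v) v := ⟨1, rfl⟩

theorem IsAncestor.trans (huv : T.IsAncestor u v) (hvw : T.IsAncestor v w) :
    T.IsAncestor u w := by
  obtain ⟨k, rfl⟩ := huv
  obtain ⟨l, rfl⟩ := hvw
  exact ⟨k + l, Function.iterate_add_apply _ _ _ _⟩

theorem IsAncestor.total (huw : T.IsAncestor u w) (hvw : T.IsAncestor v w) :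
    T.IsAncestor u v ∨ T.IsAncestor v u := by
  obtain ⟨k, rfl⟩ := huw
  obtain ⟨l, rfl⟩ := hvw
  rcases le_total k l with h | h
  · exact Or.inr ⟨l - k, by rw [← Function.iterate_add_apply, Nat.sub_add_cancel h]⟩
  · exact Or.inl ⟨k - l, by rw [← Function.iterate_add_apply, Nat.sub_add_cancel h]⟩

theorem eq_root_of_isAncestor_root (h : T.IsAncestor u T.root) : u = T.root := by
  obtain ⟨k, rfl⟩ := h
  exact Function.iterate_fixed T.parent_root k

theorem eq_root_of_parent_eq (h : T.parent v = v) : v = T.root := by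
  obtain ⟨k, hk⟩ := T.reaches v
  rwa [Function.iterate_fixed h k] at hk

theorem IsAncestor.isAncestor_parent_of_ne (h : T.IsAncestor u v) (hne : u ≠ v) :
    T.IsAncestor u (T.parent v) := by
  obtain ⟨_ | k, rfl⟩ := h
  · exact absurd rfl hne
  · exact ⟨k, (Function.iterate_succ_apply _ _ _).symm⟩

theorem IsAncestor.exists_child (h : T.IsAncestor u v) (hne : u ≠ v) :
    ∃ c, T.parent c = u ∧ T.IsAncestor c v := by
  obtain ⟨_ | k, rfl⟩ := h
  · exact absurd rfl hne
  · exact ⟨T.parent^[k] v, (Function.iterate_succ_apply' _ _ _).symm, k, rfl⟩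

end RTree

open RTree

/-- The second clause characterises visit order: the vertex visited after `v` is a child of a
vertex on the root path of `v`. -/
def RTree.IsDFSNumbering {n : ℕ} (T : RTree (Fin n)) (ord : Fin n ≃ Fin n) : Prop :=
  (ord T.root : ℕ) = 0 ∧
    ∀ i j : Fin n, (i : ℕ) = (j : ℕ) + 1 → T.IsAncestor (T.parent (ord.symm i)) (ord.symm j)

section DFSNumbering

variable {n : ℕ} {T : RTree (Fin n)} {ord : Fin n ≃ Fin n} {u v : Fin n}

theorem RTree.IsDFSNumbering.ord_le (hord : T.IsDFSNumbering ord) (h : T.IsAncestor u v) :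
    (ord u : ℕ) ≤ ord v := by
  induction ht : (ord v : ℕ) using Nat.strong_induction_on generalizing v with
  | _ t ih =>
    by_cases huv : u = v
    · rw [huv, ht]
    have ht0 : t ≠ 0 := by
      rintro rfl
      have hv : v = T.root := ord.injective (Fin.ext (ht.trans hord.1.symm))
      exact huv (hv ▸ eq_root_of_isAncestor_root (hv ▸ h))
    have hjn : t - 1 < n := by have := (ord v).isLt; omega
    have hprev := hord.2 (ord v) ⟨t - 1, hjn⟩ (by simp only; omega)
    rw [Equiv.symm_apply_apply] at hprev
    have := ih (t - 1) (by omega) ((h.isAncestor_parent_of_ne huv).trans hprev) (by simp)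
    omega

theorem RTree.IsDFSNumbering.ord_lt (hord : T.IsDFSNumbering ord) (h : T.IsAncestor u v)
    (hne : u ≠ v) : (ord u : ℕ) < ord v :=
  (hord.ord_le h).lt_of_ne fun he => hne (ord.injective (Fin.ext he))

theorem RTree.IsDFSNumbering.antisymm (hord : T.IsDFSNumbering ord) (huv : T.IsAncestor u v)
    (hvu : T.IsAncestor v u) : u = v :=
  ord.injective <| Fin.ext <| (hord.ord_le huv).antisymm (hord.ord_le hvu)

end DFSNumbering

section TreePaths

variable {V : Type*} {G : SimpleGraph V} {T : RTree V} {x a v : V}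

theorem reachable_induce_of_isAncestor (hspan : ∀ v, v ≠ T.root → G.Adj (T.parent v) v)
    (h : T.IsAncestor a v) (hx : ¬ (T.IsAncestor a x ∧ T.IsAncestor x v)) (ha : a ≠ x)
    (hv : v ≠ x) : (G.induce {w | w ≠ x}).Reachable ⟨v, hv⟩ ⟨a, ha⟩ := by
  obtain ⟨k, rfl⟩ := h
  induction k generalizing v with
  | zero => rfl
  | succ k ih =>
    simp only [Function.iterate_succ_apply] at ha hx ⊢
    by_cases hroot : v = T.root
    · subst hroot
      simp only [T.parent_root] at ha hx ⊢
      exact ih hv hx ha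
    have hpx : T.parent v ≠ x := fun h => hx ⟨⟨k, h ▸ rfl⟩, h ▸ T.isAncestor_parent v⟩
    have hadj : (G.induce {w | w ≠ x}).Adj ⟨v, hv⟩ ⟨T.parent v, hpx⟩ := (hspan v hroot).symm
    exact hadj.reachable.trans <|
      ih hpx (fun h => hx ⟨h.1, h.2.trans (T.isAncestor_parent v)⟩) ha

theorem reachable_induce_root_of_not_isAncestor (hspan : ∀ v, v ≠ T.root → G.Adj (T.parent v) v)
    (hxv : ¬ T.IsAncestor x v) (hv : v ≠ x) :
    (G.induce {w | w ≠ x}).Reachable ⟨v, hv⟩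
      ⟨T.root, fun h => hxv (h ▸ T.reaches v)⟩ :=
  reachable_induce_of_isAncestor hspan (T.reaches v) (fun h => hxv h.2) _ hv

end TreePaths

section Articulation

variable {n : ℕ} {G : SimpleGraph (Fin n)} {T : RTree (Fin n)} {ord : Fin n ≃ Fin n}
  {x c : Fin n}

theorem le_highPoint_iff {k : ℕ} :
    (k : WithTop ℕ) ≤ highPoint G T ord c ↔ k ≤ ord c ∧
      ∀ u w, T.IsAncestor c u → G.Adj u w → T.IsAncestor w u → w ≠ u → T.parent u ≠ w →
        k ≤ ord w := by
  simp only [highPoint, Finset.le_min_iff, Finset.forall_mem_image, Finset.mem_filter,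
    Finset.mem_univ, true_and, or_imp, forall_and, forall_eq, forall_exists_index, and_imp,
    Nat.cast_withTop, WithTop.coe_le_coe]
  rw [forall_comm]

theorem induce_connected_of_forall_not_le_highPoint (hord : T.IsDFSNumbering ord)
    (hspan : ∀ v, v ≠ T.root → G.Adj (T.parent v) v) (hx : x ≠ T.root)
    (hlow : ∀ c, T.parent c = x → c ≠ x → ¬ ((ord x : ℕ) : WithTop ℕ) ≤ highPoint G T ord c) :
    (G.induce {v | v ≠ x}).Connected := by
  have hrx : T.root ≠ x := hx.symm
  have to_root : ∀ v (hv : v ≠ x), (G.induce {v | v ≠ x}).Reachable ⟨v, hv⟩ ⟨T.root, hrx⟩ := by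
    intro v hv
    by_cases hxv : T.IsAncestor x v
    swap
    · exact reachable_induce_root_of_not_isAncestor hspan hxv hv
    obtain ⟨c, hcx, hcv⟩ := hxv.exists_child hv.symm
    have hc : c ≠ x := fun h => hx (eq_root_of_parent_eq (h ▸ hcx))
    have hc_x : ¬ T.IsAncestor c x := fun h => hc (hord.antisymm h (hcx ▸ T.isAncestor_parent c))
    obtain ⟨u, w, hcu, huw, -, -, -, hw⟩ : ∃ u w, T.IsAncestor c u ∧ G.Adj u w ∧
        T.IsAncestor w u ∧ w ≠ u ∧ T.parent u ≠ w ∧ (ord w : ℕ) < ord x := by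
      have := hlow c hcx hc
      rw [le_highPoint_iff] at this
      push Not at this
      exact this (hord.ord_lt (hcx ▸ T.isAncestor_parent c) hc.symm).le
    have hxw : ¬ T.IsAncestor x w := fun h => (hord.ord_le h).not_gt hw
    have hwx : w ≠ x := fun h => hxw (h ▸ T.isAncestor_refl w)
    have hux : u ≠ x := fun h => hc_x (h ▸ hcu)
    have hadj : (G.induce {v | v ≠ x}).Adj ⟨u, hux⟩ ⟨w, hwx⟩ := huw
    exact (reachable_induce_of_isAncestor hspan hcv (fun h => hc_x h.1) hc hv).trans <|
      (reachable_induce_of_isAncestor hspan hcu (fun h => hc_x h.1) hc hux).symm.trans <|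
        hadj.reachable.trans (reachable_induce_root_of_not_isAncestor hspan hxw hwx)
  have : Nonempty {v | v ≠ x} := ⟨⟨T.root, hrx⟩⟩
  exact .mk fun a b => (to_root a a.2).trans (to_root b b.2).symm

theorem isAncestor_of_adj_of_le_highPoint (hord : T.IsDFSNumbering ord)
    (hdfsProp : ∀ a b, G.Adj a b → T.IsAncestor a b ∨ T.IsAncestor b a) (hc : T.parent c = x)
    (hle : ((ord x : ℕ) : WithTop ℕ) ≤ highPoint G T ord c) {a b : Fin n} (hab : G.Adj a b)
    (hbx : b ≠ x) (hca : T.IsAncestor c a) : T.IsAncestor c b := by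
  by_contra hcb
  have hba : T.IsAncestor b a := (hdfsProp a b hab).resolve_left fun h => hcb (hca.trans h)
  have hbc : T.IsAncestor b c := (hba.total hca).resolve_right hcb
  have hbx' : T.IsAncestor b x :=
    hc ▸ hbc.isAncestor_parent_of_ne fun h => hcb (h ▸ T.isAncestor_refl b)
  have hpa : T.parent a ≠ b := by
    rintro rfl
    by_cases hac : a = c
    · exact hbx (hac ▸ hc)
    · exact hcb (hca.isAncestor_parent_of_ne (Ne.symm hac))
  exact (hord.ord_lt hbx' hbx).not_ge <|
    (le_highPoint_iff.1 hle).2 a b hca hab hba hab.ne' hpa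

theorem not_induce_connected_of_le_highPoint (hord : T.IsDFSNumbering ord)
    (hdfsProp : ∀ a b, G.Adj a b → T.IsAncestor a b ∨ T.IsAncestor b a) (hx : x ≠ T.root)
    (hc : T.parent c = x) (hcx : c ≠ x)
    (hle : ((ord x : ℕ) : WithTop ℕ) ≤ highPoint G T ord c) :
    ¬ (G.induce {v | v ≠ x}).Connected := by
  intro hconn
  have hc_root : T.IsAncestor c T.root :=
    Reachable.mem_of_adj_closed (S := {v : {v | v ≠ x} | T.IsAncestor c v})
      (fun a b hab => isAncestor_of_adj_of_le_highPoint hord hdfsProp hc hle hab b.2)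
      (hconn.preconnected ⟨c, hcx⟩ ⟨T.root, hx.symm⟩) (T.isAncestor_refl c)
  exact hx (by rw [← hc, eq_root_of_isAncestor_root hc_root, T.parent_root])

end Articulation

theorem articulation_point_iff_general {n : ℕ} (G : SimpleGraph (Fin n))
    (T : RTree (Fin n)) (ord : Fin n ≃ Fin n)
    (hroot : (ord T.root : ℕ) = 0)
    (hspan : ∀ v : Fin n, v ≠ T.root → G.Adj (T.parent v) v)
    (hdfs : ∀ i j : Fin n, (i : ℕ) = (j : ℕ) + 1 →
      T.IsAncestor (T.parent (ord.symm i)) (ord.symm j))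
    (hdfsProp : ∀ a b : Fin n, G.Adj a b → T.IsAncestor a b ∨ T.IsAncestor b a)
    (x : Fin n) (hx : x ≠ T.root) :
    ¬ (G.induce {v : Fin n | v ≠ x}).Connected ↔
      ∃ c : Fin n, T.parent c = x ∧ c ≠ x ∧
        ((ord x : ℕ) : WithTop ℕ) ≤ highPoint G T ord c := by
  have hord : T.IsDFSNumbering ord := ⟨hroot, hdfs⟩
  constructor
  · intro hdis
    by_contra hno
    exact hdis (induce_connected_of_forall_not_le_highPoint hord hspan hx
      fun c hc hcx hle => hno ⟨c, hc, hcx, hle⟩)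
  · rintro ⟨c, hc, hcx, hle⟩
    exact not_induce_connected_of_le_highPoint hord hdfsProp hx hc hcx hle

/-- Let `G` be a connected undirected graph with DFS tree `T` rooted at
`r` and dfn numbering `ord` in visit order.  A non-root vertex `x` is an articulation point
of `G` (its removal disconnects `G`) if and only if some child `c` of `x` in `T` has
high-point dfn value `≥ dfn x`. -/
theorem articulation_point_iff {n : ℕ} (G : SimpleGraph (Fin n)) (hG : G.Connected)
    (T : RTree (Fin n)) (ord : Fin n ≃ Fin n)
    (hroot : (ord T.root : ℕ) = 0)
    (hspan : ∀ v : Fin n, v ≠ T.root → G.Adj (T.parent v) v)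
    (hdfs : ∀ i j : Fin n, (i : ℕ) = (j : ℕ) + 1 →
      T.IsAncestor (T.parent (ord.symm i)) (ord.symm j))
    (hdfsProp : ∀ a b : Fin n, G.Adj a b → T.IsAncestor a b ∨ T.IsAncestor b a)
    (x : Fin n) (hx : x ≠ T.root) :
    ¬ (G.induce {v : Fin n | v ≠ x}).Connected ↔
      ∃ c : Fin n, T.parent c = x ∧ c ≠ x ∧
        ((ord x : ℕ) : WithTop ℕ) ≤ highPoint G T ord c :=
  articulation_point_iff_general G T ord hroot hspan hdfs hdfsProp x hx
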